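/- arXiv:2410.21676 — 2 statements merged into one kernel-verified Lean document; each statement's English description precedes it below -/
import Mathlib

section
/- Define for r ≥ 1 (representing Dγ/B) and D ≥ 1 the function F(r) = max{ r^{(1-b)/a}, r^{-2} } + (1/D)·r^{1/a}, with exponents a > 1 and b > a. Then the minimizer r* of F over [1, D] satisfies r* ≍ D^{a/min(b, 2a+1)}, and F(r*) ≍ D^{-min(b-1, 2a)/min(b, 2a+1)}. -/
/-!
For `r ≥ 1` the maximum is the single power `r ^ (-p)` with `p = (M - 1) / a`, `M = min b (2a + 1)`,
so the proxy is `r ^ (-p) + D⁻¹ r ^ q` with `q = 1 / a`. Writing `r = r₀ t` with `r₀ = D ^ (a / M)`,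
the point at which the two terms balance, turns it into `r₀ ^ (-p) (t ^ (-p) + t ^ q)`.
The bracket is at least `1` for every `t > 0` and equals `2` at `t = 1`, so at a minimizer it is at
most `2`, which pins `t` between two constants.
-/

open Real Set

section PowerBalance

variable {p q t C : ℝ}

lemma one_le_rpow_neg_add_rpow (hp : 0 ≤ p) (hq : 0 ≤ q) (ht : 0 < t) : 1 ≤ t ^ (-p) + t ^ q := by
  rcases le_total t 1 with h | h
  · linarith [one_le_rpow_of_pos_of_le_one_of_nonpos ht h (neg_nonpos.mpr hp),
      rpow_nonneg ht.le q]
  · linarith [one_le_rpow h hq, rpow_nonneg ht.le (-p)]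

lemma rpow_inv_neg_le_of_rpow_neg_add_rpow_le (hp : 0 < p) (ht : 0 < t)
    (h : t ^ (-p) + t ^ q ≤ C) : C ^ (-p)⁻¹ ≤ t := by
  have hpow : t ^ (-p) ≤ C := by linarith [rpow_nonneg ht.le q]
  exact (rpow_inv_le_iff_of_neg ((rpow_pos_of_pos ht _).trans_le hpow) ht (neg_neg_of_pos hp)).2
    hpow

lemma le_rpow_inv_of_rpow_neg_add_rpow_le (hq : 0 < q) (ht : 0 < t)
    (h : t ^ (-p) + t ^ q ≤ C) : t ≤ C ^ q⁻¹ := by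
  have hpow : t ^ q ≤ C := by linarith [rpow_nonneg ht.le (-p)]
  exact (le_rpow_inv_iff_of_pos ht.le ((rpow_nonneg ht.le q).trans hpow) hq).2 hpow

variable {r r₀ D : ℝ}

lemma rpow_neg_add_inv_mul_rpow_eq (hr₀ : 0 < r₀) (hr : 0 ≤ r) (hD : r₀ ^ (p + q) = D) :
    r ^ (-p) + D⁻¹ * r ^ q = r₀ ^ (-p) * ((r / r₀) ^ (-p) + (r / r₀) ^ q) := by
  subst hD
  rw [div_rpow hr hr₀.le, div_rpow hr hr₀.le, ← rpow_neg hr₀.le, rpow_neg hr₀.le p,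
    rpow_neg hr₀.le (p + q), rpow_add hr₀]
  field_simp

lemma IsMinOn.rpow_neg_add_inv_mul_rpow_bounds {s : Set ℝ} (hp : 0 < p) (hq : 0 < q)
    (hr₀ : 0 < r₀) (hD : r₀ ^ (p + q) = D) (hr : 0 < r) (hr₀s : r₀ ∈ s)
    (hmin : IsMinOn (fun r ↦ r ^ (-p) + D⁻¹ * r ^ q) s r) :
    (2 ^ (-p)⁻¹ * r₀ ≤ r ∧ r ≤ 2 ^ q⁻¹ * r₀) ∧
      (r₀ ^ (-p) ≤ r ^ (-p) + D⁻¹ * r ^ q ∧ r ^ (-p) + D⁻¹ * r ^ q ≤ 2 * r₀ ^ (-p)) := by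
  have ht : 0 < r / r₀ := div_pos hr hr₀
  have hscale := rpow_neg_add_inv_mul_rpow_eq hr₀ hr.le hD
  have hbracket : (r / r₀) ^ (-p) + (r / r₀) ^ q ≤ 2 := by
    have h := isMinOn_iff.1 hmin r₀ hr₀s
    rw [hscale, rpow_neg_add_inv_mul_rpow_eq hr₀ hr₀.le hD, div_self hr₀.ne', one_rpow,
      one_rpow] at h
    linarith [le_of_mul_le_mul_left h (rpow_pos_of_pos hr₀ (-p))]
  have hbracket₁ := one_le_rpow_neg_add_rpow hp.le hq.le ht
  have hr₀p := rpow_pos_of_pos hr₀ (-p)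
  rw [hscale]
  refine ⟨⟨?_, ?_⟩, by nlinarith, by nlinarith⟩
  · rw [← le_div_iff₀ hr₀]
    exact rpow_inv_neg_le_of_rpow_neg_add_rpow_le hp ht hbracket
  · rw [← div_le_iff₀ hr₀]
    exact le_rpow_inv_of_rpow_neg_add_rpow_le hq ht hbracket

end PowerBalance

lemma max_rpow_div_rpow_neg_two {a b r : ℝ} (ha : 0 < a) (hr : 1 ≤ r) :
    max (r ^ ((1 - b) / a)) (r ^ (-2 : ℝ)) = r ^ (-((min b (2 * a + 1) - 1) / a)) := by
  rw [← (monotone_rpow_of_base_ge_one hr).map_max]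
  congr 1
  rcases le_total b (2 * a + 1) with h | h
  · rw [min_eq_left h, max_eq_left ((le_div_iff₀ ha).2 (by linarith))]
    ring
  · rw [min_eq_right h, max_eq_right ((div_le_iff₀ ha).2 (by linarith))]
    field_simp
    ring

/-- For `F(r) = max(r^{(1-b)/a}, r^{-2}) + (1/D) r^{1/a}` with `b > a > 1` and `D ≥ 1`,
any minimizer `r*` of `F` over `[1, D]` satisfies `r* ≍ D^{a/min(b, 2a+1)}` and
`F(r*) ≍ D^{-min(b-1, 2a)/min(b, 2a+1)}`, with constants depending only on `a, b`. -/
theorem minimizer_of_risk_proxy (a b : ℝ) (ha : 1 < a) (hab : a < b) :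
    ∃ c₁ c₂ c₃ c₄ : ℝ, 0 < c₁ ∧ 0 < c₂ ∧ 0 < c₃ ∧ 0 < c₄ ∧
      ∀ (D : ℝ), 1 ≤ D →
        ∀ rstar ∈ Set.Icc (1 : ℝ) D,
          (∀ r ∈ Set.Icc (1 : ℝ) D,
              max (rstar ^ ((1 - b) / a)) (rstar ^ (-2 : ℝ)) + (1 / D) * rstar ^ (1 / a)
                ≤ max (r ^ ((1 - b) / a)) (r ^ (-2 : ℝ)) + (1 / D) * r ^ (1 / a)) →
          (c₁ * D ^ (a / min b (2 * a + 1)) ≤ rstar ∧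
            rstar ≤ c₂ * D ^ (a / min b (2 * a + 1))) ∧
          (c₃ * D ^ (-(min (b - 1) (2 * a)) / min b (2 * a + 1))
              ≤ max (rstar ^ ((1 - b) / a)) (rstar ^ (-2 : ℝ)) + (1 / D) * rstar ^ (1 / a) ∧
            max (rstar ^ ((1 - b) / a)) (rstar ^ (-2 : ℝ)) + (1 / D) * rstar ^ (1 / a)
              ≤ c₄ * D ^ (-(min (b - 1) (2 * a)) / min b (2 * a + 1))) := by
  have ha₀ : 0 < a := by linarith
  set M := min b (2 * a + 1)
  have hM : 1 < M := lt_min (by linarith) (by linarith)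
  have haM : a ≤ M := le_min hab.le (by linarith)
  set p := (M - 1) / a
  set q := 1 / a
  refine ⟨2 ^ (-p)⁻¹, 2 ^ q⁻¹, 1, 2, by positivity, by positivity, one_pos, two_pos,
    fun D hD rstar hrstar hmin => ?_⟩
  have hD₀ : 0 < D := by linarith
  set r₀ := D ^ (a / M)
  have hr₀_pow : r₀ ^ (p + q) = D := by
    rw [← rpow_mul hD₀.le, show a / M * (p + q) = 1 by simp only [p, q]; field_simp; ring, rpow_one]
  have hr₀_mem : r₀ ∈ Icc 1 D :=
    ⟨one_le_rpow hD (by positivity),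
      (rpow_le_rpow_of_exponent_le hD ((div_le_one (by linarith)).2 haM)).trans_eq (rpow_one D)⟩
  have hr₀_rpow : r₀ ^ (-p) = D ^ (-(min (b - 1) (2 * a)) / M) := by
    rw [show min (b - 1) (2 * a) = M - 1 by rw [← min_sub_sub_right, add_sub_cancel_right],
      ← rpow_mul hD₀.le]
    congr 1
    simp only [p]
    field_simp
  have hproxy : ∀ r ∈ Icc 1 D,
      max (r ^ ((1 - b) / a)) (r ^ (-2 : ℝ)) + (1 / D) * r ^ q = r ^ (-p) + D⁻¹ * r ^ q :=
    fun r hr ↦ by rw [max_rpow_div_rpow_neg_two ha₀ hr.1, one_div]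
  have hmin' : IsMinOn (fun r ↦ r ^ (-p) + D⁻¹ * r ^ q) (Icc 1 D) rstar :=
    isMinOn_iff.2 fun r hr ↦ by simpa only [hproxy r hr, hproxy rstar hrstar] using hmin r hr
  rw [hproxy rstar hrstar, ← hr₀_rpow, one_mul]
  exact hmin'.rpow_neg_add_inv_mul_rpow_bounds (div_pos (by linarith) ha₀) (one_div_pos.2 ha₀)
    (rpow_pos_of_pos hD₀ _) hr₀_pow (by linarith [hrstar.1]) hr₀_mem
end

section
/- Suppose the excess risk of mini-batch SGD with data size D, batch size B ∈ [1, D], and learning rate γ ∈ (0, c] depends on (γ, B) only through the ratio ρ = γ/B and is given (up to constants) by R(ρ, D) = max{(Dρ)^{(1-b)/a}, (Dρ)^{-2}} + (1/D)(Dρ)^{1/a} for b > a > 1. Then among all (γ, B) achieving the optimal risk rate min_ρ R(ρ, D) up to constant factors, the number of sequential steps n = D/B is minimized by choosing γ ≍ 1 and B ≍ D^{1 - a/min(b, 2a+1)}, giving n ≍ D^{a/min(b, 2a+1)}. -/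
/-!
Write `m = min b (2a+1)` and `x = Dρ` for the effective horizon. The bias term
`max (x^{(1-b)/a}) (x^{-2})` is at least `x^{(1-m)/a}`, and the variance term is `x^{1/a}/D`;
the two balance at `x = D^{a/m}`, where both equal `D^{(1-m)/m}`. Hence every `ρ` has risk at least
`D^{(1-m)/m}`, while `γ = min c 1` and `B = max 1 (γ D^{1-a/m})` put `x` within a constant factor
of `D^{a/m}` and so attain this rate. Conversely, risk within a factor `K` of optimal bounds the
bias term, forcing `x = Dγ/B ≳ D^{a/m}`, so `D/B ≥ x/c ≳ D^{a/m}` steps are needed.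
-/

noncomputable def sgdRisk (a b D ρ : ℝ) : ℝ :=
  max ((D * ρ) ^ ((1 - b) / a)) ((D * ρ) ^ (-2 : ℝ)) + (1 / D) * (D * ρ) ^ (1 / a)

open Real Set

lemma rpow_crossover_eq {a m D : ℝ} (ha : a ≠ 0) (hm : m ≠ 0) (hD : 0 < D) :
    (D ^ (a / m)) ^ ((1 - m) / a) = D ^ ((1 - m) / m) ∧
      1 / D * (D ^ (a / m)) ^ (1 / a) = D ^ ((1 - m) / m) := by
  rw [← rpow_mul hD.le, ← rpow_mul hD.le, one_div D, ← rpow_neg_one D, ← rpow_add hD]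
  constructor <;> congr 1 <;> field_simp
  ring

section

variable {a b : ℝ}

lemma rpow_le_max_rpow (ha : 0 < a) (x : ℝ) :
    x ^ ((1 - min b (2 * a + 1)) / a) ≤ max (x ^ ((1 - b) / a)) (x ^ (-2 : ℝ)) := by
  rcases min_cases b (2 * a + 1) with ⟨h, -⟩ | ⟨h, -⟩
  · rw [h]
    exact le_max_left _ _
  · rw [h, show (1 - (2 * a + 1)) / a = -2 by field_simp; ring]
    exact le_max_right _ _

lemma rpow_le_sgdRisk {D ρ : ℝ} (ha : 0 < a) (hD : 0 < D) (hρ : 0 < ρ) :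
    (D * ρ) ^ ((1 - min b (2 * a + 1)) / a) ≤ sgdRisk a b D ρ :=
  le_add_of_le_of_nonneg (rpow_le_max_rpow ha _) (by positivity)

lemma rpow_crossover_le_sgdRisk {D ρ : ℝ} (ha : 0 < a) (hb : 1 ≤ b) (hD : 0 < D)
    (hρ : 0 < ρ) :
    D ^ ((1 - min b (2 * a + 1)) / min b (2 * a + 1)) ≤ sgdRisk a b D ρ := by
  set m := min b (2 * a + 1)
  have hm : 1 ≤ m := le_min hb (by linarith)
  obtain ⟨hbias, hvar⟩ := rpow_crossover_eq ha.ne' (by positivity : m ≠ 0) hD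
  have hx : 0 < D * ρ := mul_pos hD hρ
  rcases le_total (D * ρ) (D ^ (a / m)) with h | h
  · calc D ^ ((1 - m) / m) = (D ^ (a / m)) ^ ((1 - m) / a) := hbias.symm
      _ ≤ (D * ρ) ^ ((1 - m) / a) :=
          rpow_le_rpow_of_nonpos hx h (div_nonpos_of_nonpos_of_nonneg (by linarith) ha.le)
      _ ≤ sgdRisk a b D ρ := rpow_le_sgdRisk ha hD hρ
  · calc D ^ ((1 - m) / m) = 1 / D * (D ^ (a / m)) ^ (1 / a) := hvar.symm
      _ ≤ 1 / D * (D * ρ) ^ (1 / a) := by gcongr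
      _ ≤ sgdRisk a b D ρ := le_add_of_nonneg_left (by positivity)

lemma rpow_le_mul_rpow_crossover {μ D x q : ℝ} (ha : 0 < a) (hb : 0 < b) (hμ : 0 < μ)
    (hD : 1 ≤ D) (hx : μ * D ^ (a / min b (2 * a + 1)) ≤ x) (hq : q ≤ 0)
    (hqm : q ≤ (1 - min b (2 * a + 1)) / a) :
    x ^ q ≤ μ ^ q * D ^ ((1 - min b (2 * a + 1)) / min b (2 * a + 1)) := by
  set m := min b (2 * a + 1)
  have hm : 0 < m := lt_min hb (by linarith)
  have hD0 : 0 < D := by linarith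
  calc x ^ q ≤ (μ * D ^ (a / m)) ^ q := rpow_le_rpow_of_nonpos (by positivity) hx hq
    _ = μ ^ q * (D ^ (a / m)) ^ q := mul_rpow hμ.le (by positivity)
    _ ≤ μ ^ q * (D ^ (a / m)) ^ ((1 - m) / a) := mul_le_mul_of_nonneg_left
        (rpow_le_rpow_of_exponent_le (one_le_rpow hD (by positivity)) hqm) (by positivity)
    _ = μ ^ q * D ^ ((1 - m) / m) := by
        rw [(rpow_crossover_eq ha.ne' hm.ne' hD0).1]

lemma sgdRisk_le_mul_rpow {μ D ρ : ℝ} (ha : 0 < a) (hb : 1 ≤ b) (hμ : 0 < μ) (hD : 1 ≤ D)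
    (hlo : μ * D ^ (a / min b (2 * a + 1)) ≤ D * ρ)
    (hhi : D * ρ ≤ D ^ (a / min b (2 * a + 1))) :
    sgdRisk a b D ρ ≤ (max (μ ^ ((1 - b) / a)) (μ ^ (-2 : ℝ)) + 1) *
      D ^ ((1 - min b (2 * a + 1)) / min b (2 * a + 1)) := by
  set m := min b (2 * a + 1)
  have hm : 0 < m := lt_min (by linarith) (by linarith)
  have hD0 : 0 < D := by linarith
  have hx : 0 < D * ρ := lt_of_lt_of_le (by positivity) hlo
  have hbias : max ((D * ρ) ^ ((1 - b) / a)) ((D * ρ) ^ (-2 : ℝ)) ≤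
      max (μ ^ ((1 - b) / a)) (μ ^ (-2 : ℝ)) * D ^ ((1 - m) / m) := by
    rw [max_mul_of_nonneg _ _ (by positivity)]
    refine max_le_max (rpow_le_mul_rpow_crossover ha (by linarith) hμ hD hlo ?_ ?_)
      (rpow_le_mul_rpow_crossover ha (by linarith) hμ hD hlo (by norm_num) ?_)
    · exact div_nonpos_of_nonpos_of_nonneg (by linarith) ha.le
    · gcongr
      exact min_le_left _ _
    · rw [le_div_iff₀ ha]
      linarith [min_le_right b (2 * a + 1)]
  have hvar : 1 / D * (D * ρ) ^ (1 / a) ≤ D ^ ((1 - m) / m) := by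
    rw [← (rpow_crossover_eq ha.ne' hm.ne' hD0).2]
    gcongr
  rw [sgdRisk, add_mul, one_mul]
  exact add_le_add hbias hvar

lemma le_mul_of_sgdRisk_le {C D ρ : ℝ} (ha : 0 < a) (hb : 1 < b) (hC : 0 < C) (hD : 0 < D)
    (hρ : 0 < ρ)
    (h : sgdRisk a b D ρ ≤ C * D ^ ((1 - min b (2 * a + 1)) / min b (2 * a + 1))) :
    C ^ (a / (1 - min b (2 * a + 1))) * D ^ (a / min b (2 * a + 1)) ≤ D * ρ := by
  set m := min b (2 * a + 1)
  have hm : 1 < m := lt_min hb (by linarith)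
  have hm' : 1 - m ≠ 0 := (by linarith : 1 - m < 0).ne
  have hp : (1 - m) / a < 0 := div_neg_of_neg_of_pos (by linarith) ha
  have hx : 0 < D * ρ := mul_pos hD hρ
  rw [← rpow_le_rpow_iff_of_neg hx (by positivity) hp]
  calc (D * ρ) ^ ((1 - m) / a) ≤ sgdRisk a b D ρ := rpow_le_sgdRisk ha hD hρ
    _ ≤ C * D ^ ((1 - m) / m) := h
    _ = (C ^ (a / (1 - m)) * D ^ (a / m)) ^ ((1 - m) / a) := by
        rw [mul_rpow (by positivity) (by positivity), ← rpow_mul hC.le,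
          (rpow_crossover_eq ha.ne' (by positivity) hD).1,
          show a / (1 - m) * ((1 - m) / a) = 1 by field_simp, rpow_one]

lemma mul_rpow_le_div_of_sgdRisk_le {C c D γ B : ℝ} (ha : 0 < a) (hb : 1 < b) (hC : 0 < C)
    (hD : 0 < D) (hγ : 0 < γ) (hγc : γ ≤ c) (hB : 0 < B)
    (h : sgdRisk a b D (γ / B) ≤ C * D ^ ((1 - min b (2 * a + 1)) / min b (2 * a + 1))) :
    C ^ (a / (1 - min b (2 * a + 1))) / c * D ^ (a / min b (2 * a + 1)) ≤ D / B := by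
  have hx := le_mul_of_sgdRisk_le ha hb hC hD (div_pos hγ hB) h
  calc C ^ (a / (1 - min b (2 * a + 1))) / c * D ^ (a / min b (2 * a + 1))
      = C ^ (a / (1 - min b (2 * a + 1))) * D ^ (a / min b (2 * a + 1)) / c := div_mul_eq_mul_div ..
    _ ≤ D * (γ / B) / γ := by gcongr
    _ = D / B := by field_simp

lemma rpow_crossover_le_sInf_sgdRisk {c D : ℝ} (ha : 0 < a) (hb : 1 ≤ b) (hc : 0 < c)
    (hD : 0 < D) :
    D ^ ((1 - min b (2 * a + 1)) / min b (2 * a + 1)) ≤ sInf (sgdRisk a b D '' Ioc 0 c) :=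
  le_csInf ⟨_, mem_image_of_mem _ (right_mem_Ioc.2 hc)⟩
    (forall_mem_image.2 fun _ hρ ↦ rpow_crossover_le_sgdRisk ha hb hD hρ.1)

lemma sInf_sgdRisk_le {c D ρ : ℝ} (ha : 0 < a) (hb : 1 ≤ b) (hD : 0 < D)
    (hρ : ρ ∈ Ioc 0 c) :
    sInf (sgdRisk a b D '' Ioc 0 c) ≤ sgdRisk a b D ρ :=
  csInf_le ⟨_, forall_mem_image.2 fun _ hρ ↦ rpow_crossover_le_sgdRisk ha hb hD hρ.1⟩
    (mem_image_of_mem _ hρ)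

lemma sgdRisk_div_le_mul_rpow {μ D B : ℝ} (ha : 0 < a) (hb : 1 ≤ b) (hμ : 0 < μ)
    (hD : 1 ≤ D)
    (hn : D / B ∈ Icc (D ^ (a / min b (2 * a + 1))) (μ⁻¹ * D ^ (a / min b (2 * a + 1)))) :
    sgdRisk a b D (μ / B) ≤ (max (μ ^ ((1 - b) / a)) (μ ^ (-2 : ℝ)) + 1) *
      D ^ ((1 - min b (2 * a + 1)) / min b (2 * a + 1)) := by
  refine sgdRisk_le_mul_rpow ha hb hμ hD ?_ ?_ <;> rw [mul_div_left_comm D μ B]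
  · exact mul_le_mul_of_nonneg_left hn.1 hμ.le
  · calc μ * (D / B) ≤ μ * (μ⁻¹ * D ^ (a / min b (2 * a + 1))) :=
          mul_le_mul_of_nonneg_left hn.2 hμ.le
      _ = D ^ (a / min b (2 * a + 1)) := mul_inv_cancel_left₀ hμ.ne' _

end

lemma div_mem_Icc_rpow {μ D B s : ℝ} (hμ : 0 < μ) (hD : 0 < D)
    (hlo : μ * D ^ (1 - s) ≤ B) (hhi : B ≤ D ^ (1 - s)) :
    D / B ∈ Icc (D ^ s) (μ⁻¹ * D ^ s) := by
  have hsplit : D / D ^ (1 - s) = D ^ s := by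
    rw [rpow_sub hD, rpow_one, div_div_cancel₀ hD.ne']
  have hB : 0 < B := lt_of_lt_of_le (by positivity) hlo
  constructor
  · rw [← hsplit]
    gcongr
  · calc D / B ≤ D / (μ * D ^ (1 - s)) := by gcongr
      _ = μ⁻¹ * D ^ s := by rw [← hsplit, div_mul_eq_div_div_swap, div_eq_inv_mul]

lemma max_one_mul_rpow_mem_Icc {μ D s : ℝ} (hμ1 : μ ≤ 1) (hD : 1 ≤ D) (hs : 0 ≤ s) :
    max 1 (μ * D ^ s) ∈ Icc (μ * D ^ s) (D ^ s) :=
  ⟨le_max_right _ _, max_le (one_le_rpow hD hs) (mul_le_of_le_one_left (by positivity) hμ1)⟩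

/-- Critical batch size: if the excess risk depends on `(γ, B)` (with `γ ∈ (0, c]`,
`B ∈ [1, D]`) only through `ρ = γ/B` via `sgdRisk`, then among all `(γ, B)` achieving
the optimal risk rate up to a constant factor `K`, the number of sequential steps
`n = D/B` is minimized (up to constants) by `γ ≍ 1` and `B ≍ D^{1 - a/min(b, 2a+1)}`,
giving `n ≍ D^{a/min(b, 2a+1)}`. Constants depend only on `a, b, c`. -/
theorem critical_batch_size_scaling (a b c : ℝ) (ha : 1 < a) (hab : a < b) (hc : 0 < c) :
    ∃ K k₁ k₂ k₃ : ℝ, 1 ≤ K ∧ 0 < k₁ ∧ 0 < k₂ ∧ 0 < k₃ ∧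
      ∀ D : ℝ, 1 ≤ D →
        ∃ γstar Bstar : ℝ,
          0 < γstar ∧ γstar ≤ c ∧ k₁ ≤ γstar ∧
          1 ≤ Bstar ∧ Bstar ≤ D ∧
          k₁ * D ^ (1 - a / min b (2 * a + 1)) ≤ Bstar ∧
          Bstar ≤ k₂ * D ^ (1 - a / min b (2 * a + 1)) ∧
          sgdRisk a b D (γstar / Bstar)
            ≤ K * sInf (sgdRisk a b D '' Set.Ioc 0 c) ∧
          (∀ γ B : ℝ, 0 < γ → γ ≤ c → 1 ≤ B → B ≤ D →
            sgdRisk a b D (γ / B) ≤ K * sInf (sgdRisk a b D '' Set.Ioc 0 c) →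
            D / Bstar ≤ k₃ * (D / B)) ∧
          k₁ * D ^ (a / min b (2 * a + 1)) ≤ D / Bstar ∧
          D / Bstar ≤ k₂ * D ^ (a / min b (2 * a + 1)) := by
  have ha0 : 0 < a := by linarith
  have hb : 1 ≤ b := by linarith
  set m := min b (2 * a + 1)
  have hm : a < m := lt_min hab (by linarith)
  set μ := min c 1
  have hμ : 0 < μ := lt_min hc one_pos
  have hμ1 : μ ≤ 1 := min_le_right c 1
  set K := max (μ ^ ((1 - b) / a)) (μ ^ (-2 : ℝ)) + 1
  have hK : 1 ≤ K := le_add_of_nonneg_left (by positivity)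
  set C := (K * K) ^ (a / (1 - m))
  refine ⟨K, μ, μ⁻¹, c / (μ * C), hK, hμ, inv_pos.2 hμ, by positivity, fun D hD ↦ ?_⟩
  have hD0 : 0 < D := by linarith
  have he : 1 - a / m ∈ Icc 0 1 := ⟨by rw [sub_nonneg, div_le_one (by linarith)]; exact hm.le,
    sub_le_self _ (div_nonneg ha0.le (by linarith))⟩
  set B := max 1 (μ * D ^ (1 - a / m))
  obtain ⟨hBlo, hBhi⟩ := max_one_mul_rpow_mem_Icc hμ1 hD he.1
  have hn := div_mem_Icc_rpow hμ hD0 hBlo hBhi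
  have hρ : μ / B ∈ Ioc 0 c :=
    ⟨by positivity, (div_le_self hμ.le (le_max_left _ _)).trans (min_le_left c 1)⟩
  have hopt : sgdRisk a b D (μ / B) ≤ K * D ^ ((1 - m) / m) :=
    sgdRisk_div_le_mul_rpow ha0 hb hμ hD hn
  refine ⟨μ, B, hμ, min_le_left c 1, le_rfl, le_max_left _ _,
    hBhi.trans (rpow_le_self_of_one_le hD he.2), hBlo,
    hBhi.trans (le_mul_of_one_le_left (by positivity) ((one_le_inv₀ hμ).2 hμ1)),
    hopt.trans (by gcongr; exact rpow_crossover_le_sInf_sgdRisk ha0 hb hc hD0), ?_,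
    (mul_le_of_le_one_left (by positivity) hμ1).trans hn.1, hn.2⟩
  intro γ B' hγ hγc hB' _ hrisk
  have hinf : sInf (sgdRisk a b D '' Ioc 0 c) ≤ K * D ^ ((1 - m) / m) :=
    (sInf_sgdRisk_le ha0 hb hD0 hρ).trans hopt
  have hsteps : C / c * D ^ (a / m) ≤ D / B' :=
    mul_rpow_le_div_of_sgdRisk_le ha0 (by linarith) (by positivity) hD0 hγ hγc (by linarith)
      (hrisk.trans (by rw [mul_assoc]; gcongr))
  have hC : 0 < C := by positivity
  calc D / B ≤ μ⁻¹ * D ^ (a / m) := hn.2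
    _ = c / (μ * C) * (C / c * D ^ (a / m)) := by field_simp
    _ ≤ c / (μ * C) * (D / B') := by gcongr
end
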